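/- For n ≥ 1, a subset S ⊆ {1,...,n} arises as the set of positions of occurrences of the consecutive pattern DF (a down step (1,−1) immediately followed by a flat step (1,0)) in some Łukasiewicz path of length n if and only if S ⊆ {2,...,n−1} and any two distinct elements of S differ by at least 2. -/

import Mathlib

/-- A Łukasiewicz path: vertical step components, each `≥ -1`, all partial sums
nonnegative, total sum `0`. -/
def IsLukas (w : List ℤ) : Prop :=
  (∀ s ∈ w, -1 ≤ s) ∧ (∀ k, 0 ≤ (w.take k).sum) ∧ w.sum = 0

/-- The set of (1-indexed) positions of occurrences of the consecutive pattern
`DF` in `w`: position `j` with step `j` down and step `j+1` flat. -/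
def dfPos (w : List ℤ) : Finset ℕ :=
  (Finset.Icc 1 w.length).filter fun j =>
    w[j - 1]? = some (-1) ∧ w[j]? = some 0

/-!
A `DF` at position `j` makes step `j + 1` flat, so no `DF` starts at `j + 1`; and the first
step of a Łukasiewicz path is not a down step. Conversely, given such a set `S`, start with
an up step of height `#S`, put a down step at each position of `S` and flat steps elsewhere:
the gap condition makes the step after each down step flat.
-/

open Finset

section dfPos

variable {w : List ℤ} {i j : ℕ}

lemma mem_dfPos : j ∈ dfPos w ↔ 1 ≤ j ∧ w[j - 1]? = some (-1) ∧ w[j]? = some 0 := by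
  simp only [dfPos, mem_filter, mem_Icc]
  constructor
  · rintro ⟨⟨hj, -⟩, hdown, hflat⟩
    exact ⟨hj, hdown, hflat⟩
  · rintro ⟨hj, hdown, hflat⟩
    have : j < w.length := (List.getElem?_eq_some_iff.1 hflat).1
    exact ⟨⟨hj, this.le⟩, hdown, hflat⟩

lemma lt_length_of_mem_dfPos (h : j ∈ dfPos w) : j < w.length :=
  (List.getElem?_eq_some_iff.1 (mem_dfPos.1 h).2.2).1

lemma succ_notMem_dfPos (h : j ∈ dfPos w) : j + 1 ∉ dfPos w := by
  intro hsucc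
  have hdown := (mem_dfPos.1 hsucc).2.1
  rw [Nat.add_sub_cancel, (mem_dfPos.1 h).2.2] at hdown
  simp at hdown

lemma two_le_dist_of_mem_dfPos (hi : i ∈ dfPos w) (hj : j ∈ dfPos w) (hij : i ≠ j) :
    2 ≤ Nat.dist i j := by
  by_contra! hlt
  have hadj : j = i + 1 ∨ i = j + 1 := by
    simp only [Nat.dist] at hlt
    omega
  rcases hadj with rfl | rfl
  · exact succ_notMem_dfPos hi hj
  · exact succ_notMem_dfPos hj hi

lemma IsLukas.one_notMem_dfPos (hw : IsLukas w) : 1 ∉ dfPos w := by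
  intro h
  obtain ⟨-, hdown, -⟩ := mem_dfPos.1 h
  obtain ⟨h0, hw0⟩ := List.getElem?_eq_some_iff.1 hdown
  have := hw.2.1 1
  rw [List.sum_take_succ w 0 h0, List.take_zero, List.sum_nil, zero_add, hw0] at this
  norm_num at this

lemma IsLukas.dfPos_subset (hw : IsLukas w) : dfPos w ⊆ Icc 2 (w.length - 1) := by
  intro j hj
  have h1 := (mem_dfPos.1 hj).1
  have hlt := lt_length_of_mem_dfPos hj
  have hne : j ≠ 1 := fun h => hw.one_notMem_dfPos (h ▸ hj)
  rw [mem_Icc]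
  omega

end dfPos

section dfPath

variable {n : ℕ} {S : Finset ℕ}

/-- Step `i + 1` (the list is 0-indexed, positions are 1-indexed) is a down step exactly when
`i + 1 ∈ S`; the first step additionally rises by `#S`. -/
def dfPath (n : ℕ) (S : Finset ℕ) : List ℤ :=
  (List.range n).map fun i => (if i = 0 then (#S : ℤ) else 0) - if i + 1 ∈ S then 1 else 0

@[simp]
lemma length_dfPath : (dfPath n S).length = n := by
  simp [dfPath]

lemma getElem?_dfPath {i : ℕ} (hi : i < n) :
    (dfPath n S)[i]? = some ((if i = 0 then (#S : ℤ) else 0) - if i + 1 ∈ S then 1 else 0) := by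
  simp [dfPath, hi]

lemma card_filter_succ_mem_le (m : ℕ) : #{i ∈ range m | i + 1 ∈ S} ≤ #S :=
  card_le_card_of_injOn (· + 1) (fun _ hi => (mem_filter.1 hi).2)
    fun _ _ _ _ h => Nat.succ_injective h

lemma card_filter_succ_mem_eq {m : ℕ} (hS : S ⊆ Icc 1 m) : #{i ∈ range m | i + 1 ∈ S} = #S := by
  refine card_nbij' (· + 1) (· - 1) (fun _ hi => (mem_filter.1 hi).2) (fun j hj => ?_)
    (fun i _ => Nat.add_sub_cancel i 1) (fun j hj => ?_)
  · have := mem_Icc.1 (hS hj)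
    simp only [coe_filter, mem_range, Set.mem_ofPred_eq]
    exact ⟨by omega, by rwa [Nat.sub_add_cancel this.1]⟩
  · exact Nat.sub_add_cancel (mem_Icc.1 (hS hj)).1

lemma sum_take_dfPath (m : ℕ) :
    ((dfPath n S).take m).sum =
      (if 0 < min m n then (#S : ℤ) else 0) - #{i ∈ range (min m n) | i + 1 ∈ S} := by
  rw [dfPath, ← List.map_take, List.take_range]
  -- `Finset.range` is `List.range` underneath, so this is definitional
  change ∑ i ∈ range (min m n), _ = _
  rw [sum_sub_distrib, sum_ite_eq', sum_boole]
  simp only [mem_range]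

lemma isLukas_dfPath (hS : S ⊆ Icc 1 n) : IsLukas (dfPath n S) := by
  refine ⟨fun s hs => ?_, fun m => ?_, ?_⟩
  · obtain ⟨i, -, rfl⟩ := List.mem_map.1 hs
    split_ifs <;> omega
  · have := card_filter_succ_mem_le (S := S) (min m n)
    rw [sum_take_dfPath]
    split_ifs with hm
    · omega
    · simp [Nat.eq_zero_of_not_pos hm]
  · have htotal := sum_take_dfPath (n := n) (S := S) n
    rw [List.take_of_length_le length_dfPath.le, min_self, card_filter_succ_mem_eq hS] at htotal
    rw [htotal]
    split_ifs with hn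
    · exact sub_self _
    · have : S = ∅ := subset_empty.1 (by simpa [Nat.eq_zero_of_not_pos hn] using hS)
      simp [this]

lemma dfPos_dfPath (hS : S ⊆ Icc 2 (n - 1)) (hgap : ∀ j ∈ S, j + 1 ∉ S) :
    dfPos (dfPath n S) = S := by
  have h1 : 1 ∉ S := fun h => by simpa using hS h
  ext j
  rw [mem_dfPos]
  constructor
  · rintro ⟨hj, hdown, hflat⟩
    have hjn : j < n := by simpa using (List.getElem?_eq_some_iff.1 hflat).1
    rw [getElem?_dfPath (by omega), Nat.sub_add_cancel hj, Option.some_inj] at hdown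
    split_ifs at hdown with h0 hS' <;> first | assumption | omega
  · intro hj
    have := mem_Icc.1 (hS hj)
    refine ⟨by omega, ?_, ?_⟩
    · rw [getElem?_dfPath (by omega), Nat.sub_add_cancel (by omega), if_neg (by omega), if_pos hj]
      rfl
    · rw [getElem?_dfPath (by omega), if_neg (by omega), if_neg (hgap j hj)]
      rfl

end dfPath

theorem df_position_sets (n : ℕ) :
    ∀ S : Finset ℕ, S ⊆ Finset.Icc 1 n →
      ((∃ w : List ℤ, IsLukas w ∧ w.length = n ∧ dfPos w = S) ↔
        (S ⊆ Finset.Icc 2 (n - 1) ∧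
          ∀ i ∈ S, ∀ j ∈ S, i ≠ j → 2 ≤ Nat.dist i j)) := by
  intro S _
  constructor
  · rintro ⟨w, hw, rfl, rfl⟩
    exact ⟨hw.dfPos_subset, fun i hi j hj hij => two_le_dist_of_mem_dfPos hi hj hij⟩
  · rintro ⟨hsub, hgap⟩
    have hsucc : ∀ j ∈ S, j + 1 ∉ S := fun j hj hj1 => by
      simpa [Nat.dist] using hgap j hj (j + 1) hj1 (by omega)
    have hsub' : S ⊆ Icc 1 n := hsub.trans (Icc_subset_Icc (by norm_num) (Nat.sub_le n 1))
    exact ⟨dfPath n S, isLukas_dfPath hsub', length_dfPath, dfPos_dfPath hsub hsucc⟩
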